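/- Let s ≥ 2 be an integer, r_1,...,r_s real numbers each greater than 1, and λ ≥ 1 a real number such that 1/r_1 + ... + 1/r_{s−1} + 1/(λ r_s) = 1. Then the number of pairs (p, a) with p prime, a ∈ A and p + a ≤ x is ≫ x; that is, there exist c > 0 and x_0 such that for all x ≥ x_0, #{(p,a) : p prime, a ∈ A, p + a ≤ x} ≥ c·x. -/

import Mathlib

/-- The set `A = { 2^⌊k_1^{r_1}⌋ + ... + 2^⌊k_{s-1}^{r_{s-1}}⌋ + 2^⌊⌊k_s^λ⌋^{r_s}⌋ }`,
with `k_1, ..., k_s` ranging over positive integers (indices 0-based: the last index is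
`s - 1`). -/
def romA (s : ℕ) (hs : 0 < s) (r : Fin s → ℝ) (lam : ℝ) : Set ℕ :=
  {n | ∃ k : Fin s → ℕ, (∀ i, 0 < k i) ∧
    n = (∑ i ∈ Finset.univ.filter (fun i : Fin s => (i : ℕ) < s - 1),
          2 ^ ⌊(k i : ℝ) ^ (r i)⌋₊)
      + 2 ^ ⌊((⌊(k ⟨s - 1, by omega⟩ : ℝ) ^ lam⌋₊ : ℕ) : ℝ) ^ (r ⟨s - 1, by omega⟩)⌋₊}

open Filter Real


/-- number of primes `≤ m` -/
def romP (m : ℕ) : ℕ := ((Finset.range (m + 1)).filter Nat.Prime).card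

lemma romP_mono : Monotone romP := fun a b h => by
  apply Finset.card_le_card
  exact Finset.filter_subset_filter _ (by intro x hx; simp only [Finset.mem_range] at *; omega)

lemma centralBinom_le (n : ℕ) (hn : 0 < n) :
    Nat.centralBinom n ≤ (2 * n) ^ romP (2 * n) := by
  have h0 : Nat.centralBinom n ≠ 0 := (Nat.centralBinom_pos n).ne'
  conv_lhs => rw [← Nat.factorization_prod_pow_eq_self h0]
  rw [Finsupp.prod]
  have hsub : (Nat.factorization (Nat.centralBinom n)).support ⊆
      (Finset.range (2 * n + 1)).filter Nat.Prime := by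
    intro p hp
    have hprime : p.Prime := Nat.prime_of_mem_primeFactors (by
      rwa [Nat.support_factorization] at hp)
    have hν : (Nat.factorization (Nat.centralBinom n)) p ≠ 0 :=
      Finsupp.mem_support_iff.mp hp
    have hple : p ≤ 2 * n := by
      calc p ≤ p ^ (Nat.factorization (Nat.centralBinom n)) p := Nat.le_self_pow hν p
      _ ≤ 2 * n := by
        unfold Nat.centralBinom
        exact Nat.pow_factorization_choose_le (by omega)
    simp only [Finset.mem_filter, Finset.mem_range]
    exact ⟨by omega, hprime⟩
  calc ∏ p ∈ (Nat.factorization (Nat.centralBinom n)).support,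
        p ^ (Nat.factorization (Nat.centralBinom n)) p
      ≤ ∏ _p ∈ (Nat.factorization (Nat.centralBinom n)).support, 2 * n := by
        apply Finset.prod_le_prod'
        intro p _
        unfold Nat.centralBinom
        exact Nat.pow_factorization_choose_le (by omega)
    _ = (2 * n) ^ (Nat.factorization (Nat.centralBinom n)).support.card :=
        Finset.prod_const _
    _ ≤ (2 * n) ^ romP (2 * n) := by
        apply Nat.pow_le_pow_right (by omega)
        exact Finset.card_le_card hsub

lemma four_pow_le (n : ℕ) (hn : 4 ≤ n) : 4 ^ n ≤ (2 * n) ^ (romP (2 * n) + 1) := by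
  calc 4 ^ n ≤ n * Nat.centralBinom n := (Nat.four_pow_lt_mul_centralBinom n hn).le
    _ ≤ (2 * n) * (2 * n) ^ romP (2 * n) :=
        Nat.mul_le_mul (by omega) (centralBinom_le n (by omega))
    _ = (2 * n) ^ (romP (2 * n) + 1) := by ring

/-- Chebyshev-type lower bound, real form. -/
lemma romP_lower : ∀ᶠ y : ℝ in atTop, y / (2 * Real.log y) ≤ (romP ⌊y⌋₊ : ℝ) := by
  filter_upwards [eventually_ge_atTop (400 : ℝ)] with y hy
  have hy0 : (0 : ℝ) < y := by linarith
  set n : ℕ := ⌊y⌋₊ / 2 with hn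
  have hfl : (⌊y⌋₊ : ℝ) ≤ y := Nat.floor_le hy0.le
  have hfl2 : y - 1 < (⌊y⌋₊ : ℝ) := Nat.sub_one_lt_floor y
  have hn4 : 4 ≤ n := by
    have : (400 : ℕ) ≤ ⌊y⌋₊ := Nat.le_floor (by exact_mod_cast hy)
    omega
  have h2n : 2 * n ≤ ⌊y⌋₊ := by omega
  have h2n' : ⌊y⌋₊ ≤ 2 * n + 1 := by omega
  -- real bounds on 2n
  have h2nr : (2 * n : ℝ) ≤ y := le_trans (by exact_mod_cast h2n) hfl
  have h2nr' : y - 2 ≤ (2 * n : ℝ) := by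
    have : (⌊y⌋₊ : ℝ) ≤ (2 * n : ℝ) + 1 := by exact_mod_cast h2n'
    linarith
  have hP : romP (2 * n) ≤ romP ⌊y⌋₊ := romP_mono h2n
  -- log inequality
  have hkey : (n : ℝ) * Real.log 4 ≤ (romP (2 * n) + 1) * Real.log y := by
    have h4 : ((4 : ℕ) : ℝ) ^ n ≤ ((2 * n : ℕ) : ℝ) ^ (romP (2 * n) + 1) := by
      exact_mod_cast four_pow_le n hn4
    have hlog := Real.log_le_log (by positivity) h4
    rw [Real.log_pow, Real.log_pow] at hlog
    have hlogy : Real.log (2 * n : ℕ) ≤ Real.log y := Real.log_le_log (by positivity) (by exact_mod_cast h2nr)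
    calc (n : ℝ) * Real.log 4 = (n : ℝ) * Real.log ((4:ℕ):ℝ) := by norm_num
      _ ≤ (romP (2 * n) + 1) * Real.log ((2*n : ℕ) : ℝ) := by exact_mod_cast hlog
      _ ≤ (romP (2 * n) + 1) * Real.log y := by
          apply mul_le_mul_of_nonneg_left hlogy (by positivity)
  have hlogy_pos : 0 < Real.log y := Real.log_pos (by linarith)
  have hlog4 : (1.38 : ℝ) ≤ Real.log 4 := by
    have h := Real.log_two_gt_d9
    have : Real.log 4 = 2 * Real.log 2 := by
      rw [show (4:ℝ) = 2^2 by norm_num, Real.log_pow]; push_cast; ring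
    rw [this]; linarith
  have hlogle : Real.log y ≤ 2 * Real.sqrt y := by
    have h1 : Real.log y = 2 * Real.log (Real.sqrt y) := by
      conv_lhs => rw [← Real.sq_sqrt hy0.le]
      rw [sq, Real.log_mul (by positivity) (by positivity)]; ring
    rw [h1]
    have := Real.log_le_sub_one_of_pos (Real.sqrt_pos.2 hy0)
    nlinarith [Real.sqrt_nonneg y]
  have hsqrt : 20 ≤ Real.sqrt y := by
    have : Real.sqrt 400 ≤ Real.sqrt y := Real.sqrt_le_sqrt hy
    rwa [show (400:ℝ) = 20^2 by norm_num, Real.sqrt_sq (by norm_num : (0:ℝ) ≤ 20)] at this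
  have hsq : Real.sqrt y * Real.sqrt y = y := Real.mul_self_sqrt hy0.le
  -- main chain
  have hnlb : (y - 2) / 2 ≤ (n : ℝ) := by linarith
  have hmain : y / 2 + Real.log y ≤ ((y - 2)/2) * Real.log 4 := by
    nlinarith [hsqrt, hsq, hlogle, hlog4]
  have hfinal : y / (2 * Real.log y) ≤ (romP (2*n) : ℝ) := by
    rw [div_le_iff₀ (by positivity)]
    have h1 : ((y-2)/2) * Real.log 4 ≤ (n:ℝ) * Real.log 4 := by
      apply mul_le_mul_of_nonneg_right hnlb (by linarith)
    have h2 : (n : ℝ) * Real.log 4 ≤ (romP (2 * n) + 1) * Real.log y := hkey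
    nlinarith
  calc y / (2 * Real.log y) ≤ (romP (2*n) : ℝ) := hfinal
    _ ≤ (romP ⌊y⌋₊ : ℝ) := by exact_mod_cast hP


lemma rpow_add_one_le {x p : ℝ} (hx : 0 ≤ x) (hp : 1 ≤ p) : x ^ p + 1 ≤ (x + 1) ^ p := by
  have h := NNReal.rpow_add_rpow_le_add x.toNNReal 1 hp
  have hp0 : p ≠ 0 := by positivity
  have h2 : (x.toNNReal ^ p + 1 ^ p) ≤ (x.toNNReal + 1) ^ p := by
    have := NNReal.rpow_le_rpow h (le_of_lt (by positivity : (0:ℝ) < p))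
    rwa [← NNReal.rpow_mul, one_div, inv_mul_cancel₀ hp0, NNReal.rpow_one] at this
  have h3 : ((x.toNNReal ^ p + 1 ^ p : NNReal) : ℝ) ≤ (((x.toNNReal + 1) ^ p : NNReal) : ℝ) := by
    exact_mod_cast h2
  rw [NNReal.coe_rpow, NNReal.coe_add] at h3
  simpa [Real.coe_toNNReal x hx] using h3

lemma floor_rpow_step {p : ℝ} (hp : 1 ≤ p) {k : ℕ} (hk : 1 ≤ k) :
    ⌊(k : ℝ) ^ p⌋₊ + 1 ≤ ⌊((k + 1 : ℕ) : ℝ) ^ p⌋₊ := by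
  have h1 : (k : ℝ) ^ p + 1 ≤ ((k : ℝ) + 1) ^ p := rpow_add_one_le (by positivity) hp
  have h2 : ⌊(k : ℝ) ^ p + 1⌋₊ ≤ ⌊((k + 1 : ℕ) : ℝ) ^ p⌋₊ := by
    apply Nat.floor_mono
    push_cast
    exact h1
  rwa [Nat.floor_add_one (by positivity)] at h2

/-- The exponent of `2` in the `i`-th term. -/
noncomputable def romE (s : ℕ) (r : Fin s → ℝ) (lam : ℝ) (i : Fin s) (k : ℕ) : ℕ :=
  if (i : ℕ) < s - 1 then ⌊(k : ℝ) ^ (r i)⌋₊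
  else ⌊((⌊(k : ℝ) ^ lam⌋₊ : ℕ) : ℝ) ^ (r i)⌋₊

lemma romE_mono (s : ℕ) (r : Fin s → ℝ) (lam : ℝ) (i : Fin s)
    (hri : 0 ≤ r i) (hlam : 0 ≤ lam) : Monotone (romE s r lam i) := by
  intro a b hab
  unfold romE
  split
  · exact Nat.floor_mono (Real.rpow_le_rpow (by positivity) (by exact_mod_cast hab) hri)
  · apply Nat.floor_mono
    apply Real.rpow_le_rpow (by positivity) _ hri
    exact_mod_cast Nat.floor_mono (Real.rpow_le_rpow (by positivity) (by exact_mod_cast hab) hlam)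

lemma romE_step (s : ℕ) (r : Fin s → ℝ) (lam : ℝ) (i : Fin s)
    (hri : 1 ≤ r i) (hlam : 1 ≤ lam) {k : ℕ} (hk : 1 ≤ k) :
    romE s r lam i k + 1 ≤ romE s r lam i (k + 1) := by
  unfold romE
  split
  · exact floor_rpow_step hri hk
  · set F : ℕ → ℕ := fun m => ⌊(m : ℝ) ^ lam⌋₊ with hF
    have hFk1 : 1 ≤ F k := by
      apply Nat.le_floor
      push_cast
      exact Real.one_le_rpow (by exact_mod_cast hk) (by linarith)
    have hstep : F k + 1 ≤ F (k + 1) := floor_rpow_step hlam hk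
    calc ⌊((F k : ℕ) : ℝ) ^ r i⌋₊ + 1 ≤ ⌊((F k + 1 : ℕ) : ℝ) ^ r i⌋₊ :=
          floor_rpow_step hri hFk1
      _ ≤ ⌊((F (k + 1) : ℕ) : ℝ) ^ r i⌋₊ := by
          apply Nat.floor_mono
          apply Real.rpow_le_rpow (by positivity) (by exact_mod_cast hstep) (by linarith)

lemma romE_strict (s : ℕ) (r : Fin s → ℝ) (lam : ℝ) (i : Fin s)
    (hri : 1 ≤ r i) (hlam : 1 ≤ lam) {k k' : ℕ} (hk : 1 ≤ k) (hkk : k < k') :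
    romE s r lam i k < romE s r lam i k' := by
  have h1 := romE_step s r lam i hri hlam hk
  have h2 := romE_mono s r lam i (by linarith) (by linarith) (show k + 1 ≤ k' by omega)
  omega


noncomputable def romU (L : ℝ) (j : ℕ) : ℝ := L / 2 ^ (j + 1)

noncomputable def romAlpha (s : ℕ) (r : Fin s → ℝ) (lam : ℝ) (L : ℝ) (i : Fin s) : ℝ :=
  if (i : ℕ) < s - 1 then (romU L i + 1) ^ (r i)⁻¹
  else ((romU L i + 1) ^ (r i)⁻¹ + 1) ^ lam⁻¹

noncomputable def romBeta (s : ℕ) (r : Fin s → ℝ) (lam : ℝ) (L : ℝ) (i : Fin s) : ℝ :=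
  if (i : ℕ) < s - 1 then (2 * romU L i) ^ (r i)⁻¹ else (2 * romU L i) ^ (lam * r i)⁻¹

noncomputable def romS (s : ℕ) (r : Fin s → ℝ) (lam : ℝ) (L : ℝ) (i : Fin s) : Finset ℕ :=
  Finset.Ioc ⌊romAlpha s r lam L i⌋₊ ⌊romBeta s r lam L i⌋₊

noncomputable def romSig (s : ℕ) (r : Fin s → ℝ) (lam : ℝ) (i : Fin s) : ℝ :=
  if (i : ℕ) < s - 1 then (r i)⁻¹ else (lam * r i)⁻¹

section Mem

variable {s : ℕ} {r : Fin s → ℝ} {lam : ℝ} {L : ℝ} {i : Fin s} {k : ℕ}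

lemma romS_mem (hri : 1 < r i) (hlam : 1 ≤ lam) (hu : 1 ≤ romU L i)
    (hk : k ∈ romS s r lam L i) :
    romU L i < (romE s r lam i k : ℝ) ∧ (romE s r lam i k : ℝ) ≤ 2 * romU L i := by
  set u := romU L (i : ℕ) with hudef
  have hu0 : (0:ℝ) < u := by linarith
  have hr0 : (0:ℝ) < r i := by linarith
  have hrne : r i ≠ 0 := hr0.ne'
  have hlam0 : (0:ℝ) < lam := by linarith
  have hlamne : lam ≠ 0 := hlam0.ne'
  rw [romS, Finset.mem_Ioc] at hk
  obtain ⟨hk1, hk2⟩ := hk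
  have hkα : romAlpha s r lam L i < (k : ℝ) := by
    have h1 : (⌊romAlpha s r lam L i⌋₊ : ℝ) + 1 ≤ (k : ℝ) := by exact_mod_cast hk1
    have h2 := Nat.lt_floor_add_one (romAlpha s r lam L i)
    linarith
  have hkβ : (k : ℝ) ≤ romBeta s r lam L i := by
    have hβ0 : 0 ≤ romBeta s r lam L i := by
      unfold romBeta; split <;> positivity
    calc (k:ℝ) ≤ (⌊romBeta s r lam L i⌋₊ : ℝ) := by exact_mod_cast hk2
      _ ≤ romBeta s r lam L i := Nat.floor_le hβ0
  unfold romAlpha at hkα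
  unfold romBeta at hkβ
  unfold romE
  by_cases hcase : (i : ℕ) < s - 1
  · rw [if_pos hcase] at hkα hkβ ⊢
    constructor
    · have h1 : u + 1 < (k : ℝ) ^ r i := by
        have := Real.rpow_lt_rpow (by positivity) hkα hr0
        rwa [Real.rpow_inv_rpow (by positivity) hrne] at this
      have h2 := Nat.sub_one_lt_floor ((k : ℝ) ^ r i)
      linarith
    · have h1 : (k : ℝ) ^ r i ≤ 2 * u := by
        have := Real.rpow_le_rpow (by positivity) hkβ (le_of_lt hr0)
        rwa [Real.rpow_inv_rpow (by positivity) hrne] at this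
      calc (⌊(k : ℝ) ^ r i⌋₊ : ℝ) ≤ (k : ℝ) ^ r i := Nat.floor_le (by positivity)
        _ ≤ 2 * u := h1
  · rw [if_neg hcase] at hkα hkβ ⊢
    set F : ℕ := ⌊(k : ℝ) ^ lam⌋₊ with hFdef
    constructor
    · have h1 : (u + 1) ^ (r i)⁻¹ + 1 < (k : ℝ) ^ lam := by
        have := Real.rpow_lt_rpow (by positivity) hkα hlam0
        rwa [Real.rpow_inv_rpow (by positivity) hlamne] at this
      have h2 : (u + 1) ^ (r i)⁻¹ < (F : ℝ) := by
        have := Nat.sub_one_lt_floor ((k : ℝ) ^ lam)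
        rw [← hFdef] at this
        linarith
      have h3 : u + 1 < (F : ℝ) ^ r i := by
        have := Real.rpow_lt_rpow (by positivity) h2 hr0
        rwa [Real.rpow_inv_rpow (by positivity) hrne] at this
      have h4 := Nat.sub_one_lt_floor ((F : ℝ) ^ r i)
      linarith
    · have h1 : (k : ℝ) ^ lam ≤ (2 * u) ^ (r i)⁻¹ := by
        have := Real.rpow_le_rpow (by positivity) hkβ (le_of_lt hlam0)
        rwa [← Real.rpow_mul (by positivity),
          show (lam * r i)⁻¹ * lam = (r i)⁻¹ by field_simp] at this
      have h2 : (F : ℝ) ≤ (2 * u) ^ (r i)⁻¹ := by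
        calc (F : ℝ) ≤ (k : ℝ) ^ lam := Nat.floor_le (by positivity)
          _ ≤ _ := h1
      have h3 : (F : ℝ) ^ r i ≤ 2 * u := by
        have := Real.rpow_le_rpow (by positivity) h2 (le_of_lt hr0)
        rwa [Real.rpow_inv_rpow (by positivity) hrne] at this
      calc (⌊(F : ℝ) ^ r i⌋₊ : ℝ) ≤ (F : ℝ) ^ r i := Nat.floor_le (by positivity)
        _ ≤ 2 * u := h3

lemma romS_one_le (hk : k ∈ romS s r lam L i) : 1 ≤ k := by
  rw [romS, Finset.mem_Ioc] at hk; omega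

end Mem

section Card

variable {s : ℕ} {r : Fin s → ℝ} {lam : ℝ}

lemma romS_card_lower (i : Fin s) (hri : 1 < r i) (hlam : 1 ≤ lam) :
    ∃ ε > (0:ℝ), ∀ᶠ L : ℝ in Filter.atTop,
      ε * L ^ romSig s r lam i ≤ ((romS s r lam L i).card : ℝ) := by
  have hr0 : (0:ℝ) < r i := by linarith
  have hlam0 : (0:ℝ) < lam := by linarith
  set σ := romSig s r lam i with hσdef
  have hσ0 : 0 < σ := by
    rw [hσdef, romSig]; split
    · positivity
    · positivity
  set j := (i : ℕ)
  set B : ℝ := ((2 ^ j : ℝ)⁻¹) ^ σ with hBdef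
  have hB0 : 0 < B := by positivity
  -- θ < 1
  set θ : ℝ := if j < s - 1 then ((3:ℝ)/4) ^ σ else ((7:ℝ)/8) ^ σ with hθdef
  have hθ0 : 0 ≤ θ := by rw [hθdef]; split <;> positivity
  have hθ1 : θ < 1 := by
    rw [hθdef]; split <;> exact Real.rpow_lt_one (by norm_num) (by norm_num) hσ0
  have hθB : 0 < (1 - θ) * B / 2 := by
    have h1θ : 0 < 1 - θ := by linarith
    have := mul_pos h1θ hB0
    linarith
  refine ⟨(1 - θ) * B / 2, hθB, ?_⟩
  -- eventual facts
  have htu : Filter.Tendsto (fun L : ℝ => romU L j) Filter.atTop Filter.atTop := by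
    unfold romU
    exact Filter.Tendsto.atTop_div_const (by positivity) Filter.tendsto_id
  have htur : Filter.Tendsto (fun L : ℝ => (romU L j) ^ (r i)⁻¹) Filter.atTop Filter.atTop :=
    (tendsto_rpow_atTop (by positivity)).comp htu
  have htL : Filter.Tendsto (fun L : ℝ => L ^ σ) Filter.atTop Filter.atTop :=
    tendsto_rpow_atTop hσ0
  have hc0 : (0:ℝ) < ((7:ℝ)/4) ^ (r i)⁻¹ - ((3:ℝ)/2) ^ (r i)⁻¹ := by
    have := Real.rpow_lt_rpow (by norm_num : (0:ℝ) ≤ 3/2) (by norm_num : (3:ℝ)/2 < 7/4)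
      (by positivity : (0:ℝ) < (r i)⁻¹)
    linarith
  filter_upwards [htu.eventually_ge_atTop 2,
    htur.eventually_ge_atTop (((7:ℝ)/4) ^ (r i)⁻¹ - ((3:ℝ)/2) ^ (r i)⁻¹)⁻¹,
    htL.eventually_ge_atTop (2 / ((1 - θ) * B)),
    Filter.eventually_ge_atTop (0:ℝ)] with L hu2 hur hL2 hL0
  have hu0 : (0:ℝ) < romU L j := by linarith
  set u := romU L j with hudef
  -- β = B * L ^ σ
  have h2u : 2 * u = (2 ^ j : ℝ)⁻¹ * L := by
    rw [hudef, romU]; field_simp; ring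
  have hβeq : romBeta s r lam L i = B * L ^ σ := by
    rw [romBeta, hBdef, hσdef, romSig]
    split
    · rw [h2u, Real.mul_rpow (by positivity) hL0]
    · rw [h2u, Real.mul_rpow (by positivity) hL0]
  -- α ≤ θ * B * L ^ σ
  have hαle : romAlpha s r lam L i ≤ θ * (B * L ^ σ) := by
    have hu1 : u + 1 ≤ (3/2) * u := by linarith
    rw [romAlpha, hθdef]
    by_cases hcase : (i:ℕ) < s - 1
    all_goals simp only [show j = (i:ℕ) from rfl, hcase, if_true, if_false, if_pos, if_neg, not_false_iff]
    · have h32 : (u + 1) ^ (r i)⁻¹ ≤ ((3/4) * (2 * u)) ^ (r i)⁻¹ := by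
        apply Real.rpow_le_rpow (by positivity) (by linarith) (by positivity)
      have hσr : σ = (r i)⁻¹ := by rw [hσdef, romSig, if_pos hcase]
      calc (u + 1) ^ (r i)⁻¹ ≤ ((3/4) * (2 * u)) ^ (r i)⁻¹ := h32
        _ = (3/4 : ℝ) ^ (r i)⁻¹ * (2 * u) ^ (r i)⁻¹ :=
            Real.mul_rpow (by norm_num) (by positivity)
        _ = (3/4 : ℝ) ^ σ * (B * L ^ σ) := by
            have hβ' := hβeq
            rw [romBeta, if_pos hcase] at hβ'
            rw [hσr] at hβ' ⊢
            rw [← hβ']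
    · -- last coordinate
      have hσr : σ = (lam * r i)⁻¹ := by rw [hσdef, romSig, if_neg hcase]
      have h1 : (u + 1) ^ (r i)⁻¹ + 1 ≤ ((7/4) * u) ^ (r i)⁻¹ := by
        have ha : (u + 1) ^ (r i)⁻¹ ≤ ((3/2) * u) ^ (r i)⁻¹ :=
          Real.rpow_le_rpow (by positivity) hu1 (by positivity)
        have hb : ((3/2) * u) ^ (r i)⁻¹ = (3/2:ℝ) ^ (r i)⁻¹ * u ^ (r i)⁻¹ :=
          Real.mul_rpow (by norm_num) (by positivity)
        have hc : ((7/4) * u) ^ (r i)⁻¹ = (7/4:ℝ) ^ (r i)⁻¹ * u ^ (r i)⁻¹ :=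
          Real.mul_rpow (by norm_num) (by positivity)
        have hd : 1 ≤ (((7:ℝ)/4) ^ (r i)⁻¹ - ((3:ℝ)/2) ^ (r i)⁻¹) * u ^ (r i)⁻¹ := by
          have hmul := mul_le_mul_of_nonneg_left hur hc0.le
          rw [mul_inv_cancel₀ hc0.ne'] at hmul
          linarith
        rw [hb] at ha
        rw [hc]
        nlinarith [Real.rpow_nonneg (le_of_lt hu0) (r i)⁻¹]
      have h2 : ((u + 1) ^ (r i)⁻¹ + 1) ^ lam⁻¹ ≤ (((7/4) * u) ^ (r i)⁻¹) ^ lam⁻¹ :=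
        Real.rpow_le_rpow (by positivity) h1 (by positivity)
      have h3 : (((7/4) * u) ^ (r i)⁻¹) ^ lam⁻¹ = ((7/4) * u) ^ (lam * r i)⁻¹ := by
        rw [← Real.rpow_mul (by positivity)]
        congr 1
        field_simp
      have h4 : ((7/4) * u : ℝ) = (7/8) * (2 * u) := by ring
      calc ((u + 1) ^ (r i)⁻¹ + 1) ^ lam⁻¹ ≤ ((7/4) * u) ^ (lam * r i)⁻¹ := by
            rw [← h3]; exact h2
        _ = ((7/8):ℝ) ^ (lam * r i)⁻¹ * (2 * u) ^ (lam * r i)⁻¹ := by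
            rw [h4, Real.mul_rpow (by norm_num) (by positivity)]
        _ = ((7/8):ℝ) ^ σ * (B * L ^ σ) := by
            have hβ' := hβeq
            rw [romBeta, if_neg hcase] at hβ'
            rw [hσr] at hβ' ⊢
            rw [← hβ']
  -- card bound
  have hcard : romBeta s r lam L i - romAlpha s r lam L i - 1 ≤ ((romS s r lam L i).card : ℝ) := by
    set a := ⌊romAlpha s r lam L i⌋₊
    set b := ⌊romBeta s r lam L i⌋₊
    have hα0 : 0 ≤ romAlpha s r lam L i := by
      rw [romAlpha]; split <;> positivity
    have hcard' : (romS s r lam L i).card = b - a := by rw [romS, Nat.card_Ioc]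
    rcases le_or_gt (romBeta s r lam L i - romAlpha s r lam L i - 1) 0 with h | h
    · calc romBeta s r lam L i - romAlpha s r lam L i - 1 ≤ 0 := h
        _ ≤ _ := by positivity
    · have hab : a ≤ b := by
        apply Nat.floor_mono
        linarith
      have hbound : romBeta s r lam L i - 1 - romAlpha s r lam L i ≤ (b:ℝ) - (a:ℝ) := by
        have h1 : romBeta s r lam L i - 1 < (b : ℝ) := Nat.sub_one_lt_floor _
        have h2 : (a : ℝ) ≤ romAlpha s r lam L i := Nat.floor_le hα0
        linarith
      rw [hcard']
      rw [Nat.cast_sub hab]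
      linarith
  have hθpos : (0:ℝ) < 1 - θ := by linarith
  have h2' : 2 ≤ (1 - θ) * (B * L ^ σ) := by
    have hpos : (0:ℝ) < (1 - θ) * B := mul_pos hθpos hB0
    have hh := (div_le_iff₀ hpos).mp hL2
    calc (2:ℝ) ≤ L ^ σ * ((1 - θ) * B) := hh
      _ = (1 - θ) * (B * L ^ σ) := by ring
  have hfinal : (1 - θ) * B / 2 * L ^ σ ≤ romBeta s r lam L i - romAlpha s r lam L i - 1 := by
    rw [hβeq]
    have e2 : (1 - θ) * (B * L ^ σ) = B * L ^ σ - θ * (B * L ^ σ) := by ring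
    have e1 : (1 - θ) * B / 2 * L ^ σ = (B * L ^ σ - θ * (B * L ^ σ)) / 2 := by ring
    rw [e1]
    rw [e2] at h2'
    linarith [hαle]
  linarith

end Card

noncomputable def romF (s : ℕ) (r : Fin s → ℝ) (lam : ℝ) (k : Fin s → ℕ) : ℕ :=
  ∑ i : Fin s, 2 ^ (romE s r lam i (k i))

section Main

variable {s : ℕ} {r : Fin s → ℝ} {lam : ℝ} {L : ℝ}

lemma romU_anti {i i' : Fin s} (h : (i : ℕ) < (i' : ℕ)) (hL : 0 ≤ L) :
    2 * romU L i' ≤ romU L i := by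
  unfold romU
  have h1 : 2 * (L / 2 ^ ((i' : ℕ) + 1)) = L / 2 ^ (i' : ℕ) := by
    rw [pow_succ]; field_simp
  rw [h1]
  apply div_le_div_of_nonneg_left hL (by positivity)
  exact pow_le_pow_right₀ (by norm_num) h

lemma romS_sep (hr : ∀ i, 1 < r i) (hlam : 1 ≤ lam) (hL : ∀ i : Fin s, 1 ≤ romU L i)
    {i i' : Fin s} (hne : i ≠ i') {x y : ℕ}
    (hxi : x ∈ romS s r lam L i) (hyi : y ∈ romS s r lam L i') :
    romE s r lam i x ≠ romE s r lam i' y := by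
  have hL0 : 0 ≤ L := by
    have h1 := hL i
    unfold romU at h1
    have h2 : (0:ℝ) < 2 ^ ((i:ℕ)+1) := by positivity
    have h3 := (le_div_iff₀ h2).mp h1
    nlinarith
  have hx := romS_mem (hr i) hlam (hL i) hxi
  have hy := romS_mem (hr i') hlam (hL i') hyi
  rcases Nat.lt_trichotomy (i : ℕ) (i' : ℕ) with h | h | h
  · have := romU_anti (i := i) (i' := i') h hL0
    intro heq
    rw [heq] at hx
    linarith [hx.1, hy.2]
  · exact absurd (Fin.ext h) hne
  · have := romU_anti (i := i') (i' := i) h hL0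
    intro heq
    rw [← heq] at hy
    linarith [hx.2, hy.1]

lemma romF_injOn (hr : ∀ i, 1 < r i) (hlam : 1 ≤ lam) (hL : ∀ i : Fin s, 1 ≤ romU L i) :
    Set.InjOn (romF s r lam) (Fintype.piFinset (romS s r lam L)) := by
  intro k hk k' hk' heq
  have hmem : ∀ i, k i ∈ romS s r lam L i := by
    simpa [Fintype.mem_piFinset] using hk
  have hmem' : ∀ i, k' i ∈ romS s r lam L i := by
    simpa [Fintype.mem_piFinset] using hk'
  set g : Fin s → ℕ := fun i => romE s r lam i (k i) with hg
  set g' : Fin s → ℕ := fun i => romE s r lam i (k' i) with hg'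
  have hginj : Function.Injective g := by
    intro a b hab
    by_contra hne
    exact romS_sep hr hlam hL hne (hmem a) (hmem b) hab
  have hginj' : Function.Injective g' := by
    intro a b hab
    by_contra hne
    exact romS_sep hr hlam hL hne (hmem' a) (hmem' b) hab
  have hsum : ∑ m ∈ Finset.univ.image g, 2 ^ m = ∑ m ∈ Finset.univ.image g', 2 ^ m := by
    rw [Finset.sum_image (fun a _ b _ h => hginj h),
      Finset.sum_image (fun a _ b _ h => hginj' h)]
    exact heq
  have himg : Finset.univ.image g = Finset.univ.image g' :=
    Finset.geomSum_injective (le_refl 2) hsum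
  have hgeq : ∀ i, g i = g' i := by
    intro i
    have : g i ∈ Finset.univ.image g' := by
      rw [← himg]; exact Finset.mem_image_of_mem g (Finset.mem_univ i)
    obtain ⟨i', _, hi'⟩ := Finset.mem_image.mp this
    by_cases hii : i' = i
    · subst hii
      exact hi'.symm
    · exact absurd hi' (romS_sep hr hlam hL hii (hmem' i') (hmem i))
  funext i
  have h1 : 1 ≤ k i := romS_one_le (hmem i)
  have h1' : 1 ≤ k' i := romS_one_le (hmem' i)
  rcases Nat.lt_trichotomy (k i) (k' i) with h | h | h
  · exact absurd (hgeq i) (Nat.ne_of_lt (romE_strict s r lam i (hr i).le hlam h1 h))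
  · exact h
  · exact absurd (hgeq i).symm (Nat.ne_of_lt (romE_strict s r lam i (hr i).le hlam h1' h))

lemma romF_le (hr : ∀ i, 1 < r i) (hlam : 1 ≤ lam) (hL : ∀ i : Fin s, 1 ≤ romU L i)
    {k : Fin s → ℕ} (hk : ∀ i, k i ∈ romS s r lam L i) :
    (romF s r lam k : ℝ) ≤ s * (2 : ℝ) ^ L := by
  rcases Nat.eq_zero_or_pos s with hs0 | hs0
  · subst hs0
    simp [romF]
  have hL0 : 0 ≤ L := by
    have i0 : Fin s := ⟨0, hs0⟩
    have h1 := hL i0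
    unfold romU at h1
    have h2 : (0:ℝ) < 2 ^ ((i0:ℕ)+1) := by positivity
    have h3 := (le_div_iff₀ h2).mp h1
    nlinarith
  unfold romF
  push_cast
  calc ∑ i : Fin s, (2:ℝ) ^ (romE s r lam i (k i)) ≤ ∑ _i : Fin s, (2:ℝ) ^ L := by
        apply Finset.sum_le_sum
        intro i _
        have hb := romS_mem (hr i) hlam (hL i) (hk i)
        have hgL : ((romE s r lam i (k i) : ℕ) : ℝ) ≤ L := by
          have h2u : 2 * romU L i ≤ L := by
            unfold romU
            rw [pow_succ]
            have h2 : (0:ℝ) < (2:ℝ) ^ (i:ℕ) := by positivity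
            rw [div_mul_eq_div_div]
            have : L / (2:ℝ) ^ (i:ℕ) ≤ L := by
              apply div_le_self hL0
              exact one_le_pow₀ (by norm_num)
            linarith [hb.1, hb.2]
          linarith [hb.2]
        calc (2:ℝ) ^ (romE s r lam i (k i)) = (2:ℝ) ^ ((romE s r lam i (k i) : ℕ) : ℝ) := by
              rw [Real.rpow_natCast]
          _ ≤ (2:ℝ) ^ L := Real.rpow_le_rpow_of_exponent_le (by norm_num) hgL
    _ = s * (2:ℝ) ^ L := by
        rw [Finset.sum_const, Finset.card_univ, Fintype.card_fin, nsmul_eq_mul]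

end Main

section Main2

variable {s : ℕ} {r : Fin s → ℝ} {lam : ℝ} {L : ℝ}

lemma rom_filter_not_eq (hs : 2 ≤ s) :
    Finset.univ.filter (fun i : Fin s => ¬((i : ℕ) < s - 1)) = {⟨s - 1, Nat.sub_one_lt_of_lt (Nat.lt_of_lt_of_le Nat.zero_lt_two hs)⟩} := by
  ext i
  simp only [Finset.mem_filter, Finset.mem_univ, true_and, Finset.mem_singleton]
  constructor
  · intro h
    have := i.isLt
    exact Fin.ext (by show (i:ℕ) = s - 1; omega)
  · intro h
    rw [h]
    show ¬(s - 1 < s - 1)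
    omega

lemma romF_mem_romA (hs : 2 ≤ s) {k : Fin s → ℕ}
    (hk : ∀ i, k i ∈ romS s r lam L i) :
    romF s r lam k ∈ romA s (Nat.lt_of_lt_of_le Nat.zero_lt_two hs) r lam := by
  refine ⟨k, fun i => romS_one_le (hk i), ?_⟩
  unfold romF
  rw [← Finset.sum_filter_add_sum_filter_not Finset.univ (fun i : Fin s => (i : ℕ) < s - 1)]
  congr 1
  · apply Finset.sum_congr rfl
    intro i hi
    rw [Finset.mem_filter] at hi
    rw [romE, if_pos hi.2]
  · rw [rom_filter_not_eq hs, Finset.sum_singleton, romE, if_neg (by show ¬(s - 1 < s - 1); omega)]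

lemma romSig_sum (hs : 2 ≤ s)
    (hsum : (∑ i ∈ Finset.univ.filter (fun i : Fin s => (i : ℕ) < s - 1), (r i)⁻¹)
      + (lam * r ⟨s - 1, Nat.sub_one_lt_of_lt (Nat.lt_of_lt_of_le Nat.zero_lt_two hs)⟩)⁻¹ = 1) :
    ∑ i : Fin s, romSig s r lam i = 1 := by
  rw [← Finset.sum_filter_add_sum_filter_not Finset.univ (fun i : Fin s => (i : ℕ) < s - 1)]
  rw [rom_filter_not_eq hs, Finset.sum_singleton]
  rw [← hsum]
  congr 1
  · apply Finset.sum_congr rfl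
    intro i hi
    rw [Finset.mem_filter] at hi
    rw [romSig, if_pos hi.2]
  · rw [romSig, if_neg (by show ¬(s - 1 < s - 1); omega)]

lemma rom_prod_rpow (hs : 2 ≤ s) (hL : 0 < L)
    (hsum : (∑ i ∈ Finset.univ.filter (fun i : Fin s => (i : ℕ) < s - 1), (r i)⁻¹)
      + (lam * r ⟨s - 1, Nat.sub_one_lt_of_lt (Nat.lt_of_lt_of_le Nat.zero_lt_two hs)⟩)⁻¹ = 1) :
    ∏ i : Fin s, L ^ romSig s r lam i = L := by
  have h1 : ∀ i : Fin s, L ^ romSig s r lam i = Real.exp (Real.log L * romSig s r lam i) :=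
    fun i => Real.rpow_def_of_pos hL _
  calc ∏ i : Fin s, L ^ romSig s r lam i
      = ∏ i : Fin s, Real.exp (Real.log L * romSig s r lam i) := by
        exact Finset.prod_congr rfl (fun i _ => h1 i)
    _ = Real.exp (∑ i : Fin s, Real.log L * romSig s r lam i) := (Real.exp_sum _ _).symm
    _ = Real.exp (Real.log L * ∑ i : Fin s, romSig s r lam i) := by rw [Finset.mul_sum]
    _ = L := by rw [romSig_sum hs hsum, mul_one, Real.exp_log hL]

end Main2

/-- the number of pairs `(p, a)` with `p` prime, `a ∈ A`, `p + a ≤ x`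
is `≫ x`. -/
theorem romA_rep_sum_lower (s : ℕ) (hs : 2 ≤ s) (r : Fin s → ℝ) (hr : ∀ i, 1 < r i)
    (lam : ℝ) (hlam : 1 ≤ lam)
    (hsum : (∑ i ∈ Finset.univ.filter (fun i : Fin s => (i : ℕ) < s - 1), (r i)⁻¹)
      + (lam * r ⟨s - 1, by omega⟩)⁻¹ = 1) :
    ∃ c > (0 : ℝ), ∃ x₀ : ℝ, ∀ x : ℝ, x₀ ≤ x →
      c * x ≤ (({q : ℕ × ℕ | q.1.Prime ∧ q.2 ∈ romA s (by omega) r lam ∧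
        ((q.1 + q.2 : ℕ) : ℝ) ≤ x} : Set (ℕ × ℕ)).ncard : ℝ) := by
  classical
  choose ε hε0 hεev using fun i : Fin s => romS_card_lower (r := r) (lam := lam) i (hr i) hlam
  set E : ℝ := ∏ i : Fin s, ε i with hE
  have hEpos : 0 < E := Finset.prod_pos (fun i _ => hε0 i)
  have hlog2 : (0:ℝ) < Real.log 2 := Real.log_pos (by norm_num)
  refine ⟨E / (8 * Real.log 2), by positivity, ?_⟩
  set Lf : ℝ → ℝ := fun x => Real.logb 2 x - (s + 1) with hLf
  have hLtend : Filter.Tendsto Lf Filter.atTop Filter.atTop := by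
    have := Real.tendsto_logb_atTop (by norm_num : (1:ℝ) < 2)
    exact Filter.tendsto_atTop_add_const_right _ (-(s + 1 : ℝ)) this |>.congr
      (fun x => by rw [hLf]; ring_nf)
  have hhalf : Filter.Tendsto (fun x : ℝ => x / 2) Filter.atTop Filter.atTop :=
    Filter.Tendsto.atTop_div_const (by norm_num) Filter.tendsto_id
  have hlogtend : Filter.Tendsto Real.log Filter.atTop Filter.atTop := Real.tendsto_log_atTop
  have hev : ∀ᶠ x : ℝ in Filter.atTop,
      (E / (8 * Real.log 2)) * x ≤ (({q : ℕ × ℕ | q.1.Prime ∧ q.2 ∈ romA s (by omega) r lam ∧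
        ((q.1 + q.2 : ℕ) : ℝ) ≤ x} : Set (ℕ × ℕ)).ncard : ℝ) := by
    filter_upwards [hLtend.eventually (Filter.eventually_all.mpr hεev),
      hhalf.eventually romP_lower,
      hLtend.eventually_ge_atTop ((2:ℝ) ^ (s + 1)),
      hlogtend.eventually_ge_atTop (2 * Real.log 2 * (s + 1)),
      Filter.eventually_ge_atTop (4:ℝ)] with x hcard hprime hLbig hlogbig hx4
    have hx0 : (0:ℝ) < x := by linarith
    have hlogx : (0:ℝ) < Real.log x := Real.log_pos (by linarith)
    have hlogx2 : (0:ℝ) < Real.log (x / 2) := Real.log_pos (by linarith)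
    set L : ℝ := Lf x with hLdef
    have hL0 : (0:ℝ) < L := by
      have : (0:ℝ) < (2:ℝ) ^ (s + 1) := by positivity
      linarith
    -- romU lower bounds
    have hu : ∀ i : Fin s, 1 ≤ romU L (i : ℕ) := by
      intro i
      unfold romU
      rw [le_div_iff₀ (by positivity)]
      have h1 : ((2:ℝ)) ^ ((i:ℕ) + 1) ≤ (2:ℝ) ^ (s + 1) :=
        pow_le_pow_right₀ (by norm_num) (by omega)
      linarith
    -- L vs log x
    have hLlog : Real.log x / (2 * Real.log 2) ≤ L := by
      have h1 : ((s:ℝ) + 1) ≤ Real.log x / (2 * Real.log 2) := by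
        rw [le_div_iff₀ (by positivity)]
        nlinarith
      have h3 : L = Real.log x / Real.log 2 - ((s:ℝ) + 1) := by
        rw [hLdef]
        show Real.logb 2 x - ((s:ℝ) + 1) = _
        rw [Real.logb]
      rw [h3]
      have h2 : Real.log x / (2 * Real.log 2) + Real.log x / (2 * Real.log 2)
          = Real.log x / Real.log 2 := by ring
      linarith
    -- finsets
    set Pfin : Finset ℕ := (Finset.range (⌊x / 2⌋₊ + 1)).filter Nat.Prime with hPfin
    set Tfin : Finset ℕ :=
      Finset.image (romF s r lam) (Fintype.piFinset (romS s r lam L)) with hTfin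
    -- T card
    have hTcard : E * L ≤ (Tfin.card : ℝ) := by
      rw [hTfin, Finset.card_image_of_injOn (romF_injOn hr hlam hu)]
      rw [Fintype.card_piFinset]
      push_cast
      calc E * L = (∏ i : Fin s, ε i) * ∏ i : Fin s, L ^ romSig s r lam i := by
            rw [rom_prod_rpow hs hL0 hsum, hE]
        _ = ∏ i : Fin s, ε i * L ^ romSig s r lam i := by rw [Finset.prod_mul_distrib]
        _ ≤ ∏ i : Fin s, ((romS s r lam L i).card : ℝ) := by
            apply Finset.prod_le_prod
            · intro i _
              have := hε0 i
              have : (0:ℝ) ≤ L ^ romSig s r lam i := Real.rpow_nonneg hL0.le _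
              positivity
            · intro i _
              exact hcard i
    -- member bound for Tfin elements
    have hTbound : ∀ a ∈ Tfin, (a : ℝ) ≤ x / 2 := by
      intro a ha
      rw [hTfin, Finset.mem_image] at ha
      obtain ⟨k, hk, rfl⟩ := ha
      have hk' : ∀ i, k i ∈ romS s r lam L i := by
        simpa [Fintype.mem_piFinset] using hk
      have h1 : (romF s r lam k : ℝ) ≤ s * (2:ℝ) ^ L := romF_le hr hlam hu hk'
      have h2 : (2:ℝ) ^ L = x / 2 ^ (s + 1) := by
        rw [hLdef]
        show (2:ℝ) ^ (Real.logb 2 x - (s + 1)) = x / 2 ^ (s + 1)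
        rw [Real.rpow_sub (by norm_num), Real.rpow_logb (by norm_num) (by norm_num) hx0]
        congr 1
        rw [show ((s:ℝ) + 1) = ((s + 1 : ℕ) : ℝ) by push_cast; ring, Real.rpow_natCast]
      have h3 : (s : ℝ) * (x / 2 ^ (s + 1)) ≤ x / 2 := by
        have hs2 : (s : ℝ) ≤ 2 ^ s := by
          exact_mod_cast (Nat.lt_two_pow_self (n := s)).le
        have h4 : (s : ℝ) * (x / 2 ^ (s + 1)) ≤ (2:ℝ) ^ s * (x / 2 ^ (s + 1)) := by
          apply mul_le_mul_of_nonneg_right hs2 (by positivity)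
        have h5 : (2:ℝ) ^ s * (x / 2 ^ (s + 1)) = x / 2 := by
          rw [pow_succ]; field_simp
        linarith
      rw [h2] at h1
      linarith
    -- the pair set
    set PS : Set (ℕ × ℕ) := {q : ℕ × ℕ | q.1.Prime ∧ q.2 ∈ romA s (by omega) r lam ∧
        ((q.1 + q.2 : ℕ) : ℝ) ≤ x} with hPS
    have hsub : ↑(Pfin ×ˢ Tfin) ⊆ PS := by
      rintro ⟨p, a⟩ hpa
      rw [Finset.coe_product] at hpa
      obtain ⟨hp, ha⟩ := hpa
      simp only [Finset.mem_coe, hPfin, Finset.mem_filter, Finset.mem_range] at hp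
      have hpprime := hp.2
      have hple : (p : ℝ) ≤ x / 2 := by
        have : p ≤ ⌊x / 2⌋₊ := by omega
        calc (p:ℝ) ≤ (⌊x / 2⌋₊ : ℝ) := by exact_mod_cast this
          _ ≤ x / 2 := Nat.floor_le (by positivity)
      have ha' : a ∈ Tfin := ha
      have hale : (a : ℝ) ≤ x / 2 := hTbound a ha'
      have hmem : a ∈ romA s (by omega) r lam := by
        rw [hTfin, Finset.mem_image] at ha'
        obtain ⟨k, hk, rfl⟩ := ha'
        exact romF_mem_romA hs (by simpa [Fintype.mem_piFinset] using hk)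
      refine ⟨hpprime, hmem, ?_⟩
      push_cast
      linarith
    have hfin : PS.Finite := by
      apply Set.Finite.subset (Set.finite_Iic ((⌊x⌋₊, ⌊x⌋₊) : ℕ × ℕ))
      rintro ⟨p, a⟩ hpa
      obtain ⟨_, _, hle⟩ := hpa
      have : p + a ≤ ⌊x⌋₊ := Nat.le_floor (by push_cast at hle ⊢; linarith)
      constructor <;> (simp only []; omega)
    have hcount : ((Pfin ×ˢ Tfin).card : ℝ) ≤ (PS.ncard : ℝ) := by
      have := Set.ncard_le_ncard hsub hfin
      rw [Set.ncard_coe_finset] at this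
      exact_mod_cast this
    -- prime count
    have hPcard : x / (4 * Real.log x) ≤ (Pfin.card : ℝ) := by
      have h1 : x / 2 / (2 * Real.log (x / 2)) ≤ ((romP ⌊x / 2⌋₊ : ℕ) : ℝ) := hprime
      have h2 : x / (4 * Real.log x) ≤ x / 2 / (2 * Real.log (x / 2)) := by
        rw [show x / 2 / (2 * Real.log (x / 2)) = x / (4 * Real.log (x / 2)) by ring]
        apply div_le_div_of_nonneg_left hx0.le (by positivity)
        have : Real.log (x / 2) ≤ Real.log x := Real.log_le_log (by positivity) (by linarith)
        linarith
      have h3 : Pfin.card = romP ⌊x / 2⌋₊ := rfl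
      rw [h3]
      linarith
    -- final arithmetic
    have hTpos : (0:ℝ) ≤ E * (Real.log x / (2 * Real.log 2)) := by positivity
    have hT2 : E * (Real.log x / (2 * Real.log 2)) ≤ (Tfin.card : ℝ) := by
      calc E * (Real.log x / (2 * Real.log 2)) ≤ E * L := by
            apply mul_le_mul_of_nonneg_left hLlog hEpos.le
        _ ≤ _ := hTcard
    have hprod : (x / (4 * Real.log x)) * (E * (Real.log x / (2 * Real.log 2)))
        ≤ ((Pfin ×ˢ Tfin).card : ℝ) := by
      rw [Finset.card_product]
      push_cast
      exact mul_le_mul hPcard hT2 hTpos (by positivity)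
    have heq : (x / (4 * Real.log x)) * (E * (Real.log x / (2 * Real.log 2)))
        = E / (8 * Real.log 2) * x := by
      field_simp
      ring
    rw [heq] at hprod
    calc E / (8 * Real.log 2) * x ≤ ((Pfin ×ˢ Tfin).card : ℝ) := hprod
      _ ≤ (PS.ncard : ℝ) := hcount
  obtain ⟨x₀, hx₀⟩ := Filter.eventually_atTop.mp hev
  exact ⟨x₀, hx₀⟩
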